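/- arXiv:math/0311473 — 3 statements merged into one kernel-verified Lean document; each statement's English description precedes it below -/
import Mathlib

section
/- Let R be a local ring with maximal ideal m, residue field of characteristic ≠ 2, and φ a quadratic form on R^m with associated bilinear form ⟨,⟩ satisfying ⟨w,w⟩ = 2φ(w). Suppose v ∈ R^m satisfies φ(v) = 1, and suppose ω' ∈ (R/m)^m satisfies φ̄(ω') = 1 and ⟨v̄, ω'⟩ − 1 is a unit in R/m. Then there exists ω ∈ R^m with φ(ω) = 1 whose reduction modulo m equals ω'. -/
open QuadraticMap IsLocalRing

lemma isUnit_add_mem_maximalIdeal {R : Type*} [CommRing R] [IsLocalRing R] {x y : R}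
    (hx : IsUnit x) (hy : y ∈ maximalIdeal R) : IsUnit (x + y) := by
  by_contra hxy
  have : x + y ∈ maximalIdeal R := (IsLocalRing.mem_maximalIdeal _).2 hxy
  have : x ∈ maximalIdeal R := by
    have := (maximalIdeal R).sub_mem this hy
    simpa using this
  exact (IsLocalRing.mem_maximalIdeal _).1 this hx

/-- **lifting representations.** Let `R` be local with `2` invertible,
`φ` a quadratic form on `R^m` with associated bilinear form the polar form
(so `⟨w,w⟩ = 2φ(w)`), and `v` with `φ(v) = 1`.  If `ω̃ ∈ R^m` reduces modulo the maximal
ideal to a vector `ω'` with `φ̄(ω') = 1` (i.e. `φ(ω̃) - 1 ∈ m`) and `⟨v̄,ω'⟩ - 1` a unit of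
the residue field (i.e. `⟨v,ω̃⟩ - 1 ∈ Rˣ`), then there is `ω ∈ R^m` with `φ(ω) = 1` whose
reduction modulo `m` is `ω'`. -/
theorem lift_representation {R : Type*} [CommRing R] [IsLocalRing R]
    [Invertible (2 : R)] {m : ℕ} (φ : QuadraticForm R (Fin m → R))
    (v : Fin m → R) (hv : φ v = 1)
    (ω' : Fin m → R)
    (hω'1 : φ ω' - 1 ∈ maximalIdeal R)
    (hω'2 : IsUnit (polarBilin φ v ω' - 1)) :
    ∃ ω : Fin m → R, φ ω = 1 ∧ ∀ i, ω i - ω' i ∈ maximalIdeal R := by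
  classical
  set h : R := φ ω' - 1 with hh
  set P : R := polar φ v ω' with hP
  -- We find a unit `e` equal to `P - 2` or `P + 2`, such that `D` below is a unit.
  -- In either case, `ω = (-h/D) • v + (e/D) • ω'` works, where `D = e - h` resp. `e + h`.
  have key : ∀ e ε : R, (ε = 1 ∨ ε = -1) → e = P - ε * 2 → IsUnit (e - ε * h) →
      ∃ ω : Fin m → R, φ ω = 1 ∧ ∀ i, ω i - ω' i ∈ maximalIdeal R := by
    intro e ε hε he hD
    obtain ⟨Dinv, hDinv⟩ := isUnit_iff_exists_inv.1 hD
    refine ⟨(-h * Dinv) • v + (e * Dinv) • ω', ?_, ?_⟩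
    · have expand : φ ((-h * Dinv) • v + (e * Dinv) • ω')
          = (-h * Dinv) * (-h * Dinv) * φ v + polar φ ((-h * Dinv) • v) ((e * Dinv) • ω')
            + (e * Dinv) * (e * Dinv) * φ ω' := by
        rw [QuadraticMap.polar]
        rw [QuadraticMap.map_smul, QuadraticMap.map_smul]
        ring_nf
      rw [expand, QuadraticMap.polar_smul_left, QuadraticMap.polar_smul_right, hv]
      have hφω' : φ ω' = 1 + h := by rw [hh]; ring
      rw [hφω', smul_eq_mul, smul_eq_mul, ← hP]
      rcases hε with rfl | rfl
      · rw [he] at hDinv ⊢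
        linear_combination ((P - 1 * 2 - 1 * h) * Dinv + 1) * hDinv
      · rw [he] at hDinv ⊢
        linear_combination ((P - (-1) * 2 - (-1) * h) * Dinv + 1) * hDinv
    · intro i
      have : ((-h * Dinv) • v + (e * Dinv) • ω') i - ω' i
          = (-h * Dinv) * v i + ((e - (e - ε * h)) * Dinv) * ω' i
            + ((e - ε * h) * Dinv - 1) * ω' i := by
        simp [smul_eq_mul]
        ring
      rw [this, hDinv]
      have h1 : (-h * Dinv) * v i ∈ maximalIdeal R := by
        refine Ideal.mul_mem_right _ _ (Ideal.mul_mem_right _ _ ?_)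
        simpa [hh] using (maximalIdeal R).neg_mem hω'1
      have h2 : ((e - (e - ε * h)) * Dinv) * ω' i ∈ maximalIdeal R := by
        refine Ideal.mul_mem_right _ _ (Ideal.mul_mem_right _ _ ?_)
        have : e - (e - ε * h) = ε * h := by ring
        rw [this]
        exact Ideal.mul_mem_left _ _ (by simpa [hh] using hω'1)
      have h3 : ((1:R) - 1) * ω' i ∈ maximalIdeal R := by
        norm_num
      exact (maximalIdeal R).add_mem ((maximalIdeal R).add_mem h1 h2) h3
  have h2 : IsUnit (2 : R) := isUnit_of_invertible 2
  by_cases hu : IsUnit (P - 2)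
  · refine key (P - 2) 1 (Or.inl rfl) (by ring) ?_
    have : h ∈ maximalIdeal R := hω'1
    have := isUnit_add_mem_maximalIdeal hu ((maximalIdeal R).neg_mem this)
    convert this using 1; ring
  · have hm : P - 2 ∈ maximalIdeal R := (IsLocalRing.mem_maximalIdeal _).2 hu
    have h4 : IsUnit (4 : R) := by
      have := h2.mul h2
      convert this using 1; norm_num
    have hu' : IsUnit (P + 2) := by
      have := isUnit_add_mem_maximalIdeal h4 hm
      convert this using 1; ring
    refine key (P + 2) (-1) (Or.inr rfl) (by ring) ?_
    have := isUnit_add_mem_maximalIdeal hu' hω'1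
    convert this using 1; simp [hh]; ring
end

section
/- Let F be an algebraically closed field of characteristic ≠ 2 and f(t) ∈ F[t] a monic separable polynomial of degree n with f(0) ≠ 0. Then there exists a separable polynomial g(t) ∈ F[t] of degree n−1, coprime with f(t), with −g(0)·f(0) = 1, and polynomials g₁(t), g₂(t) of degree n−1 such that t·g₁(t)·g₂(t) = g(t)·f(t) + 1. -/
open Polynomial

/-- Over an algebraically closed field `F` of characteristic `≠ 2`, given
a monic separable polynomial `f` of degree `n ≥ 1` with `f(0) ≠ 0`, there exist a separable
polynomial `g` of degree `n-1`, coprime to `f`, with `-g(0)·f(0) = 1`, and polynomials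
`g₁, g₂` of degree `n-1` with `t·g₁(t)·g₂(t) = g(t)·f(t) + 1`. -/
theorem exists_factorization_alg_closed {F : Type*} [Field F] [IsAlgClosed F]
    (hchar : (2 : F) ≠ 0) (f : F[X]) (hf : f.Monic) (hsep : f.Separable)
    (n : ℕ) (hn : 0 < n) (hdeg : f.natDegree = n) (hf0 : f.eval 0 ≠ 0) :
    ∃ g g₁ g₂ : F[X],
      g.Separable ∧ g.natDegree = n - 1 ∧ IsCoprime g f ∧
      -(g.eval 0 * f.eval 0) = 1 ∧
      g₁.natDegree = n - 1 ∧ g₂.natDegree = n - 1 ∧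
      X * g₁ * g₂ = g * f + 1 := by
  classical
  have hfne : f ≠ 0 := hf.ne_zero
  -- The "good" set: nonzero elements that are not roots of `f`; it is infinite.
  have hSinf : {x : F | x ≠ 0 ∧ f.eval x ≠ 0}.Infinite := by
    have hfin : ({0} ∪ {x : F | IsRoot f x}).Finite :=
      (Set.finite_singleton 0).union (finite_setOf_isRoot hfne)
    have : {x : F | x ≠ 0 ∧ f.eval x ≠ 0} = ({0} ∪ {x : F | IsRoot f x})ᶜ := by
      ext x
      simp [IsRoot, not_or, and_comm]
    rw [this]
    exact hfin.infinite_compl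
  obtain ⟨t, hts, htcard⟩ := hSinf.exists_subset_card_eq (n - 1)
  -- the basic separable polynomial with roots `t`
  set p : F[X] := ∏ a ∈ t, (X - C a) with hp
  have hpmonic : p.Monic := monic_prod_of_monic _ _ fun a _ => monic_X_sub_C a
  have hpne : p ≠ 0 := hpmonic.ne_zero
  have hpdeg : p.natDegree = n - 1 := by
    rw [hp, natDegree_prod _ _ fun a _ => X_sub_C_ne_zero a]
    simp [htcard]
  have hpsep : p.Separable :=
    separable_prod_X_sub_C_iff'.2 fun x _ y _ h => h
  have hp0 : p.eval 0 ≠ 0 := by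
    rw [hp, eval_prod]
    refine Finset.prod_ne_zero_iff.2 fun a ha => ?_
    have := (hts ha).1
    simp only [eval_sub, eval_X, eval_C, zero_sub, neg_ne_zero]
    exact this
  have hpcop : IsCoprime p f := by
    refine IsCoprime.prod_left fun a ha => ?_
    rw [(irreducible_X_sub_C a).coprime_iff_not_dvd, dvd_iff_isRoot]
    exact (hts ha).2
  -- scale it to get `g`
  set c : F := -(f.eval 0)⁻¹ * (p.eval 0)⁻¹ with hc
  have hcne : c ≠ 0 := by
    simp [hc, hf0, hp0]
  have hcu : IsUnit (C c) := isUnit_C.2 hcne.isUnit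
  set g : F[X] := C c * p with hg
  have hgsep : g.Separable := by
    rw [separable_def, hg, derivative_C_mul,
      isCoprime_mul_unit_left_left hcu, isCoprime_mul_unit_left_right hcu]
    exact hpsep
  have hgdeg : g.natDegree = n - 1 := by
    rw [hg, natDegree_C_mul hcne, hpdeg]
  have hgne : g ≠ 0 := by
    rw [hg]
    exact mul_ne_zero (by simpa using hcne) hpne
  have hgcop : IsCoprime g f := by
    rw [hg, isCoprime_mul_unit_left_left hcu]
    exact hpcop
  have hg0 : g.eval 0 * f.eval 0 = -1 := by
    rw [hg, eval_mul, eval_C, hc]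
    field_simp
  -- degree of g*f + 1
  have hgfdeg : (g * f + 1).natDegree = 2 * n - 1 := by
    have h1 : (g * f).natDegree = 2 * n - 1 := by
      rw [natDegree_mul hgne hfne, hgdeg, hdeg]
      omega
    calc (g * f + 1).natDegree = (g * f + C 1).natDegree := by rw [map_one]
      _ = (g * f).natDegree := natDegree_add_C
      _ = 2 * n - 1 := h1
  -- X divides g*f + 1
  obtain ⟨h, hh⟩ : X ∣ g * f + 1 := by
    rw [X_dvd_iff, coeff_zero_eq_eval_zero]
    simp [hg0]
  have hgfne : g * f + 1 ≠ 0 := by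
    intro h0
    rw [h0] at hgfdeg
    simp at hgfdeg
    omega
  have hhne : h ≠ 0 := by
    intro h0
    rw [h0, mul_zero] at hh
    exact hgfne hh
  have hhdeg : h.natDegree = 2 * n - 2 := by
    have := hgfdeg
    rw [hh, natDegree_mul X_ne_zero hhne, natDegree_X] at this
    omega
  -- factor h over the algebraically closed field
  have hsplits : Splits h := IsAlgClosed.splits h
  have hroots : h.roots.card = 2 * n - 2 := by
    rw [splits_iff_card_roots.1 hsplits, hhdeg]
  have hprod : h = C h.leadingCoeff * (h.roots.map fun a => X - C a).prod :=
    hsplits.eq_prod_roots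
  -- split the roots into two halves
  set s₁ : Multiset F := ↑(h.roots.toList.take (n - 1)) with hs₁
  have hs₁le : s₁ ≤ h.roots := by
    conv_rhs => rw [← h.roots.coe_toList]
    exact Multiset.coe_le.2 (List.take_sublist _ _).subperm
  have hs₁card : Multiset.card s₁ = n - 1 := by
    rw [hs₁, Multiset.coe_card, List.length_take, Multiset.length_toList, hroots]
    omega
  set s₂ : Multiset F := h.roots - s₁ with hs₂
  have hs₂card : Multiset.card s₂ = n - 1 := by
    rw [hs₂, Multiset.card_sub hs₁le, hroots, hs₁card]
    omega
  have hsum : s₁ + s₂ = h.roots := add_tsub_cancel_of_le hs₁le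
  set g₁ : F[X] := C h.leadingCoeff * (s₁.map fun a => X - C a).prod with hg₁
  set g₂ : F[X] := (s₂.map fun a => X - C a).prod with hg₂
  have hlcne : h.leadingCoeff ≠ 0 := leadingCoeff_ne_zero.2 hhne
  refine ⟨g, g₁, g₂, hgsep, hgdeg, hgcop, by rw [hg0]; ring, ?_, ?_, ?_⟩
  · rw [hg₁, natDegree_C_mul hlcne, natDegree_multiset_prod_X_sub_C_eq_card, hs₁card]
  · rw [hg₂, natDegree_multiset_prod_X_sub_C_eq_card, hs₂card]
  · rw [hh, hg₁, hg₂]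
    conv_lhs => rw [mul_assoc, mul_assoc]
    rw [← Multiset.prod_add, ← Multiset.map_add, hsum, ← hprod]
end

section
/- Let S be a semi-local commutative ring with all residue fields infinite. Let W be an open subscheme of the multiplicative group G_m over Spec S such that for each closed point x of Spec S the fiber W_x is non-empty. Then there exists a unit b ∈ S* such that b² ∈ W(S). -/
open Polynomial PrimeSpectrum

/-- Let `S` be a semi-local commutative ring with all residue fields
infinite.  Represent the multiplicative group `𝔾_{m,S}` as the basic open set `D(t)` of
`Spec S[t]`, and let `W` be an open subset of it.  If for each closed point `x` of
`Spec S` (maximal ideal of `S`) the fiber of `W` over `x` is non-empty, then there is a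
unit `b ∈ Sˣ` such that the section `t ↦ b²` of `𝔾_{m,S} → Spec S` factors through `W`,
i.e. `b² ∈ W(S)`. -/
theorem exists_square_section {S : Type*} [CommRing S]
    (hsemilocal : {I : Ideal S | I.IsMaximal}.Finite)
    (hres : ∀ I : Ideal S, I.IsMaximal → Infinite (S ⧸ I))
    (W : Set (PrimeSpectrum (Polynomial S))) (hWopen : IsOpen W)
    (hWGm : ∀ P ∈ W, (X : Polynomial S) ∉ P.asIdeal)
    (hfib : ∀ x : PrimeSpectrum S, x.asIdeal.IsMaximal →
      ∃ P ∈ W, PrimeSpectrum.comap (C : S →+* Polynomial S) P = x) :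
    ∃ b : Sˣ, ∀ x : PrimeSpectrum S,
      PrimeSpectrum.comap (Polynomial.evalRingHom ((b : S) ^ 2)) x ∈ W := by
  classical
  obtain ⟨s, hs⟩ := (isClosed_iff_zeroLocus Wᶜ).mp hWopen.isClosed_compl
  have hmem : ∀ P : PrimeSpectrum (Polynomial S),
      P ∈ W ↔ ¬ s ⊆ (P.asIdeal : Set (Polynomial S)) := by
    intro P
    rw [← mem_zeroLocus, ← hs]
    simp
  set ι := {I : Ideal S | I.IsMaximal} with hι
  haveI : Finite ι := hsemilocal.to_subtype
  -- For each maximal ideal, choose a suitable polynomial `f ∈ s` and residue `a`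
  have key : ∀ m : ι, ∃ (f : Polynomial S) (a : S ⧸ (m : Ideal S)), f ∈ s ∧ a ≠ 0 ∧
      ∀ b : S, Ideal.Quotient.mk (m : Ideal S) b = a →
        f.eval (b ^ 2) ∉ (m : Ideal S) := by
    rintro ⟨m, hm⟩
    haveI : m.IsMaximal := hm
    obtain ⟨P, hPW, hPx⟩ := hfib ⟨m, hm.isPrime⟩ hm
    have hcomap : P.asIdeal.comap (C : S →+* Polynomial S) = m := by
      have := congrArg PrimeSpectrum.asIdeal hPx
      simpa using this
    obtain ⟨f, hfs, hfP⟩ := Set.not_subset.mp ((hmem P).mp hPW)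
    have hXP := hWGm P hPW
    have hgP : f * X ∉ P.asIdeal := fun h =>
      (P.isPrime.mem_or_mem h).elim hfP hXP
    letI : Field (S ⧸ m) := Ideal.Quotient.field m
    haveI : Infinite (S ⧸ m) := hres m hm
    set φ := Ideal.Quotient.mk m with hφ
    set h : Polynomial (S ⧸ m) := (f * X).map φ with hh
    have hh0 : h ≠ 0 := by
      intro h0
      apply hgP
      refine Ideal.polynomial_mem_ideal_of_coeff_mem_ideal P.asIdeal (f * X) fun n => ?_
      rw [hcomap]
      have hc0 : (map φ (f * X)).coeff n = 0 := by rw [← hh, h0]; simp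
      rw [Polynomial.coeff_map] at hc0
      exact Ideal.Quotient.eq_zero_iff_mem.mp hc0
    have hcomp : h.comp (X ^ 2) ≠ 0 := by
      intro hc
      rcases Polynomial.comp_eq_zero_iff.mp hc with h0 | ⟨-, habs⟩
      · exact hh0 h0
      · have : ((X : Polynomial (S ⧸ m)) ^ 2).coeff 2 = (C (((X : Polynomial (S ⧸ m)) ^ 2).coeff 0)).coeff 2 := by
          rw [← habs]
        simp [Polynomial.coeff_X_pow] at this
    obtain ⟨a, ha⟩ : ∃ a : S ⧸ m, (h.comp (X ^ 2)).eval a ≠ 0 := by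
      by_contra hc
      push_neg at hc
      exact hcomp (Polynomial.zero_of_eval_zero _ hc)
    rw [Polynomial.eval_comp, Polynomial.eval_pow, Polynomial.eval_X] at ha
    have ha0 : a ≠ 0 := by
      rintro rfl
      apply ha
      simp [hh, Polynomial.map_mul]
    refine ⟨f, a, hfs, ha0, ?_⟩
    intro b hb hbm
    apply ha
    have h1 : h.eval (a ^ 2) = φ ((f * X).eval (b ^ 2)) := by
      rw [← hb, hh]
      rw [Polynomial.eval_map, ← map_pow, Polynomial.eval₂_at_apply]
    rw [h1]
    rw [Ideal.Quotient.eq_zero_iff_mem]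
    have : (f * X).eval (b ^ 2) = f.eval (b ^ 2) * b ^ 2 := by simp
    rw [this]
    exact Ideal.mul_mem_right _ _ hbm
  choose f a hfs ha0 hval using key
  -- Chinese remainder theorem to glue the residues
  have hcop : Pairwise fun i j : ι => IsCoprime (i : Ideal S) (j : Ideal S) := by
    intro i j hij
    exact Ideal.isCoprime_iff_sup_eq.mpr (Ideal.IsMaximal.coprime_of_ne i.2 j.2 (fun h => hij (Subtype.ext h)))
  obtain ⟨b, hbmk⟩ := Ideal.pi_quotient_surjective hcop a
  have hbmk' : ∀ i : ι, Ideal.Quotient.mk (i : Ideal S) b = a i := fun i => hbmk i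
  -- b is a unit
  have hbnm : ∀ i : ι, b ∉ (i : Ideal S) := by
    intro i hbI
    exact ha0 i (by rw [← hbmk' i]; exact Ideal.Quotient.eq_zero_iff_mem.mpr hbI)
  have hbu : IsUnit b := by
    by_contra hb'
    obtain ⟨M, hM, hbM⟩ := Ideal.exists_le_maximal (Ideal.span {b})
      (fun h => hb' (Ideal.span_singleton_eq_top.mp h))
    exact hbnm ⟨M, hM⟩ (hbM (Ideal.mem_span_singleton_self b))
  refine ⟨hbu.unit, fun x => ?_⟩
  rw [hmem]
  intro hsub
  obtain ⟨M, hM, hxM⟩ := x.asIdeal.exists_le_maximal x.isPrime.ne_top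
  set i : ι := ⟨M, hM⟩ with hi
  have hfree := hval i b (hbmk' i)
  apply hfree
  apply hxM
  have hmemx := hsub (hfs i)
  simp only [SetLike.mem_coe, PrimeSpectrum.comap_asIdeal, Ideal.mem_comap,
    Polynomial.coe_evalRingHom, hbu.unit_spec] at hmemx
  exact hmemx
end
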